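/- Let p ∈ (0,1) with p ≠ 1/2, q = 1 - p, let X be a Bernoulli(p) random variable, and let Y be a symmetrizer for X (Y independent of X with finite variance and X + Y symmetric around zero) achieving the minimum variance, i.e., Var(Y) = pq. Then Y has the same distribution as -X: P(Y = -1) = p and P(Y = 0) = q. Hence the minimum variance symmetrizer of Bernoulli(p) is unique in distribution. -/

import Mathlib

/-!
The test function `φ y = y ^ 2 + y - sin (π y) / π` is nonnegative and vanishes only at `-1`
and `0`. Symmetry of `X + Y` gives `E[X + Y] = 0`, so `E[Y] = -p`, and then `Var Y = p q`
gives `E[Y²] = p`. Since `X` is integer valued, `sin (π (X + Y)) = cos (π X) sin (π Y)`, so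
symmetry and independence give `0 = E[sin (π (X + Y))] = (q - p) E[sin (π Y)]`. Hence
`E[φ Y] = 0`, so `Y ∈ {-1, 0}` almost surely, and `E[Y] = -p` fixes the two masses.
-/

open MeasureTheory ProbabilityTheory Real

lemma sin_pi_mul_div_pi_lt_sq_add_self_of_neg_half_le {y : ℝ} (hy : -(1 / 2) ≤ y)
    (h0 : y ≠ 0) : sin (π * y) / π < y ^ 2 + y := by
  rw [div_lt_iff₀ pi_pos]
  rcases h0.lt_or_gt with hneg | hpos
  · -- `sin x > x - x ^ 3 / 6` at `x = -π y`, which suffices because `π ^ 2 (-y) ≤ π ^ 2 / 2 < 6`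
    have hsin := sin_gt_sub_cube (x := π * -y) (by nlinarith [pi_pos])
    have hpi : 0 ≤ 6 + π ^ 2 * y := by nlinarith [pi_pos, pi_lt_d2]
    rw [mul_neg, sin_neg] at hsin
    nlinarith [mul_nonneg (mul_nonneg pi_pos.le (sq_nonneg y)) hpi]
  · nlinarith [sin_lt (mul_pos pi_pos hpos), mul_pos pi_pos (pow_pos hpos 2)]

lemma sin_pi_mul_div_pi_lt_sq_add_self {y : ℝ} (h0 : y ≠ 0) (h1 : y ≠ -1) :
    sin (π * y) / π < y ^ 2 + y := by
  rcases le_or_gt (-(1 / 2)) y with hy | hy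
  · exact sin_pi_mul_div_pi_lt_sq_add_self_of_neg_half_le hy h0
  · -- both sides are invariant under the reflection `y ↦ -1 - y`
    have hreflected := sin_pi_mul_div_pi_lt_sq_add_self_of_neg_half_le (y := -1 - y) (by linarith)
      (by contrapose! h1; linarith)
    have hsin : sin (π * (-1 - y)) = sin (π * y) := by
      rw [show π * (-1 - y) = -(π * y + π) by ring, sin_neg, sin_add_pi, neg_neg]
    rw [hsin] at hreflected
    linarith

lemma sin_pi_mul_div_pi_le_sq_add_self (y : ℝ) : sin (π * y) / π ≤ y ^ 2 + y := by
  by_cases h0 : y = 0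
  · simp [h0]
  by_cases h1 : y = -1
  · simp [h1]
  exact (sin_pi_mul_div_pi_lt_sq_add_self h0 h1).le

section

variable {Ω : Type*} [MeasurableSpace Ω] {μ : Measure Ω}

lemma ae_eq_or_eq_iff_measure_add_eq_one [IsProbabilityMeasure μ] {Z : Ω → ℝ}
    (hZ : Measurable Z) {a b : ℝ} (hab : a ≠ b) :
    (∀ᵐ ω ∂μ, Z ω = a ∨ Z ω = b) ↔ μ {ω | Z ω = a} + μ {ω | Z ω = b} = 1 := by
  have hb : MeasurableSet {ω | Z ω = b} := hZ (measurableSet_singleton b)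
  have hdisj : Disjoint {ω | Z ω = a} {ω | Z ω = b} :=
    Set.disjoint_left.2 fun ω ha hb' => hab (ha.symm.trans hb')
  have hab_meas : MeasurableSet {ω | Z ω = a ∨ Z ω = b} := by
    rw [Set.ofPred_or]; exact (hZ (measurableSet_singleton a)).union hb
  rw [ae_iff_measure_eq hab_meas.nullMeasurableSet, Set.ofPred_or, measure_union hdisj hb,
    measure_univ]

lemma integral_comp_of_ae_eq_or_eq [IsFiniteMeasure μ] {Z : Ω → ℝ} (hZ : Measurable Z)
    {a b : ℝ} (hab : a ≠ b) (h : ∀ᵐ ω ∂μ, Z ω = a ∨ Z ω = b) (g : ℝ → ℝ) :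
    ∫ ω, g (Z ω) ∂μ = μ.real {ω | Z ω = a} * g a + μ.real {ω | Z ω = b} * g b := by
  have ha : MeasurableSet {ω | Z ω = a} := hZ (measurableSet_singleton a)
  have hb : MeasurableSet {ω | Z ω = b} := hZ (measurableSet_singleton b)
  have hsplit : (fun ω => g (Z ω)) =ᵐ[μ]
      {ω | Z ω = a}.indicator (fun _ => g a) + {ω | Z ω = b}.indicator (fun _ => g b) := by
    filter_upwards [h] with ω hω
    rcases hω with hω | hω <;> simp [hω, hab, hab.symm]
  rw [integral_congr_ae hsplit, integral_add' ((integrable_const _).indicator ha)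
    ((integrable_const _).indicator hb), integral_indicator_const _ ha,
    integral_indicator_const _ hb, smul_eq_mul, smul_eq_mul]

lemma integral_comp_of_bernoulli [IsProbabilityMeasure μ] {X : Ω → ℝ} (hX : Measurable X)
    {p : ℝ} (hp0 : 0 ≤ p) (hp1 : p ≤ 1) (hX1 : μ {ω | X ω = 1} = ENNReal.ofReal p)
    (hX0 : μ {ω | X ω = 0} = ENNReal.ofReal (1 - p)) :
    (∀ᵐ ω ∂μ, X ω = 1 ∨ X ω = 0) ∧ ∀ g : ℝ → ℝ, ∫ ω, g (X ω) ∂μ = p * g 1 + (1 - p) * g 0 := by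
  have hXae : ∀ᵐ ω ∂μ, X ω = 1 ∨ X ω = 0 := by
    rw [ae_eq_or_eq_iff_measure_add_eq_one hX one_ne_zero, hX1, hX0,
      ← ENNReal.ofReal_add hp0 (by linarith)]
    simp
  refine ⟨hXae, fun g => ?_⟩
  rw [integral_comp_of_ae_eq_or_eq hX one_ne_zero hXae, measureReal_def, measureReal_def, hX1,
    hX0, ENNReal.toReal_ofReal hp0, ENNReal.toReal_ofReal (by linarith)]

lemma measure_eq_ofReal_integral_of_ae_eq_neg_one_or_eq_zero [IsProbabilityMeasure μ]
    {Z : Ω → ℝ} (hZ : Measurable Z) (h : ∀ᵐ ω ∂μ, Z ω = -1 ∨ Z ω = 0) :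
    μ {ω | Z ω = -1} = ENNReal.ofReal (-∫ ω, Z ω ∂μ) ∧
      μ {ω | Z ω = 0} = ENNReal.ofReal (1 + ∫ ω, Z ω ∂μ) := by
  have hE := integral_comp_of_ae_eq_or_eq hZ (by norm_num) h fun z => z
  have hmass := integral_comp_of_ae_eq_or_eq hZ (by norm_num) h fun _ => (1 : ℝ)
  simp only [integral_const, probReal_univ, smul_eq_mul, mul_one, mul_neg, mul_zero] at hE hmass
  constructor <;> rw [← ofReal_measureReal] <;> congr 1 <;> linarith

lemma map_eq_map_of_ae_eq_or_eq {Z W : Ω → ℝ} (hZ : AEMeasurable Z μ) (hW : AEMeasurable W μ)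
    {a b : ℝ} (hab : a ≠ b) (hZab : ∀ᵐ ω ∂μ, Z ω = a ∨ Z ω = b)
    (hWab : ∀ᵐ ω ∂μ, W ω = a ∨ W ω = b) (ha : μ {ω | Z ω = a} = μ {ω | W ω = a})
    (hb : μ {ω | Z ω = b} = μ {ω | W ω = b}) : μ.map Z = μ.map W := by
  rw [(Measure.ae_eq_or_eq_iff_map_eq_dirac_add_dirac hZ hab).1 hZab,
    (Measure.ae_eq_or_eq_iff_map_eq_dirac_add_dirac hW hab).1 hWab]
  exact congrArg₂ (· + ·) (congrArg (· • _) ha) (congrArg (· • _) hb)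

lemma integral_comp_eq_zero_of_map_eq_map_neg {S : Ω → ℝ} (hS : AEMeasurable S μ)
    (hsymm : μ.map S = μ.map (fun ω => -S ω)) {f : ℝ → ℝ} (hf : Measurable f)
    (hodd : ∀ x, f (-x) = -f x) : ∫ ω, f (S ω) ∂μ = 0 := by
  have h := integral_map hS hf.aestronglyMeasurable (μ := μ)
  rw [hsymm, integral_map (φ := fun ω => -S ω) hS.neg hf.aestronglyMeasurable] at h
  simp only [hodd, integral_neg] at h
  linarith

lemma integral_eq_neg_integral_of_map_add_eq_map_neg {X Y : Ω → ℝ} (hX : Integrable X μ)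
    (hY : Integrable Y μ)
    (hsymm : μ.map (fun ω => X ω + Y ω) = μ.map (fun ω => -(X ω + Y ω))) :
    ∫ ω, Y ω ∂μ = -∫ ω, X ω ∂μ := by
  have h : ∫ ω, (X ω + Y ω) ∂μ = 0 :=
    integral_comp_eq_zero_of_map_eq_map_neg (hX.add hY).aemeasurable hsymm measurable_id
      fun _ => rfl
  rw [integral_add hX hY] at h
  linarith

lemma ProbabilityTheory.IndepFun.integral_sin_pi_mul_add {X Y : Ω → ℝ} (hXY : IndepFun X Y μ)
    (hX : AEMeasurable X μ) (hY : AEMeasurable Y μ) (hXint : ∀ᵐ ω ∂μ, ∃ n : ℤ, X ω = n) :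
    ∫ ω, sin (π * (X ω + Y ω)) ∂μ = (∫ ω, cos (π * X ω) ∂μ) * ∫ ω, sin (π * Y ω) ∂μ := by
  have hexpand : (fun ω => sin (π * (X ω + Y ω))) =ᵐ[μ]
      fun ω => cos (π * X ω) * sin (π * Y ω) := by
    filter_upwards [hXint] with ω ⟨n, hn⟩
    rw [mul_add, sin_add, hn, mul_comm π, sin_int_mul_pi, zero_mul, zero_add]
  rw [integral_congr_ae hexpand]
  exact hXY.integral_fun_comp_mul_comp (f := fun x => cos (π * x)) (g := fun y => sin (π * y))
    hX hY (by fun_prop) (by fun_prop)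

lemma ProbabilityTheory.IndepFun.integral_sin_pi_mul_eq_zero_of_map_add_eq_map_neg
    {X Y : Ω → ℝ} (hXY : IndepFun X Y μ) (hX : AEMeasurable X μ) (hY : AEMeasurable Y μ)
    (hXint : ∀ᵐ ω ∂μ, ∃ n : ℤ, X ω = n) (hcos : ∫ ω, cos (π * X ω) ∂μ ≠ 0)
    (hsymm : μ.map (fun ω => X ω + Y ω) = μ.map (fun ω => -(X ω + Y ω))) :
    ∫ ω, sin (π * Y ω) ∂μ = 0 := by
  have h : ∫ ω, sin (π * (X ω + Y ω)) ∂μ = 0 :=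
    integral_comp_eq_zero_of_map_eq_map_neg (hX.add hY) hsymm (f := fun x => sin (π * x))
      (by fun_prop) fun x => by rw [mul_neg, sin_neg]
  rw [hXY.integral_sin_pi_mul_add hX hY hXint] at h
  exact (mul_eq_zero.1 h).resolve_left hcos

lemma ae_eq_neg_one_or_eq_zero_of_integral_eq_zero [IsFiniteMeasure μ] {Y : Ω → ℝ}
    (hY : MemLp Y 2 μ) (hmom : ∫ ω, Y ω ^ 2 ∂μ + ∫ ω, Y ω ∂μ = 0)
    (hsin : ∫ ω, sin (π * Y ω) ∂μ = 0) : ∀ᵐ ω ∂μ, Y ω = -1 ∨ Y ω = 0 := by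
  have hpoly_int : Integrable (fun ω => Y ω ^ 2 + Y ω) μ :=
    hY.integrable_sq.add (hY.integrable one_le_two)
  have hsin_int : Integrable (fun ω => sin (π * Y ω)) μ :=
    .of_bound (by have := hY.aestronglyMeasurable; fun_prop) 1
      (ae_of_all _ fun ω => by simpa using abs_sin_le_one _)
  have hgap_int : Integrable (fun ω => Y ω ^ 2 + Y ω - sin (π * Y ω) / π) μ :=
    hpoly_int.sub (hsin_int.div_const π)
  have hgap : (fun ω => Y ω ^ 2 + Y ω - sin (π * Y ω) / π) =ᵐ[μ] 0 := by
    refine (integral_eq_zero_iff_of_nonneg (fun ω => ?_) hgap_int).1 ?_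
    · exact sub_nonneg.2 (sin_pi_mul_div_pi_le_sq_add_self _)
    · rw [integral_sub hpoly_int (hsin_int.div_const π),
        integral_add hY.integrable_sq (hY.integrable one_le_two), integral_div, hsin, hmom]
      simp
  filter_upwards [hgap] with ω hω
  by_contra! h
  have hlt := sin_pi_mul_div_pi_lt_sq_add_self h.2 h.1
  simp only [Pi.zero_apply] at hω
  linarith

end

/-- **Uniqueness of the minimum variance symmetrizer.** If `X` is Bernoulli(`p`) with
`p ∈ (0,1)`, `p ≠ 1/2`, `q = 1 - p`, and `Y` is a symmetrizer for `X` (independent of `X`,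
finite variance, `X + Y` symmetric around zero) with minimal variance `Var(Y) = pq`, then
`Y` has the distribution of `-X`: `P(Y = -1) = p` and `P(Y = 0) = q`. -/
theorem minimal_symmetrizer_unique
    {Ω : Type*} [MeasurableSpace Ω] (μ : Measure Ω) [IsProbabilityMeasure μ]
    (p : ℝ) (hp : p ∈ Set.Ioo (0 : ℝ) 1) (hp_ne : p ≠ 1 / 2)
    (X Y : Ω → ℝ) (hX : Measurable X) (hY : Measurable Y)
    (hX1 : μ {ω | X ω = 1} = ENNReal.ofReal p)
    (hX0 : μ {ω | X ω = 0} = ENNReal.ofReal (1 - p))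
    (hindep : IndepFun X Y μ)
    (hY_L2 : MemLp Y 2 μ)
    (hsymm : μ.map (fun ω => X ω + Y ω) = μ.map (fun ω => -(X ω + Y ω)))
    (hvar : variance Y μ = p * (1 - p)) :
    μ.map Y = μ.map (fun ω => -X ω) ∧
    μ {ω | Y ω = -1} = ENNReal.ofReal p ∧
    μ {ω | Y ω = 0} = ENNReal.ofReal (1 - p) := by
  obtain ⟨hXae, hEX⟩ := integral_comp_of_bernoulli hX hp.1.le hp.2.le hX1 hX0
  have hX_int : Integrable X μ := .of_bound hX.aestronglyMeasurable 1 <|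
    hXae.mono fun ω h => by rcases h with h | h <;> simp [h]
  have hX_intValued : ∀ᵐ ω ∂μ, ∃ n : ℤ, X ω = n :=
    hXae.mono fun ω h => h.elim (fun h => ⟨1, by simp [h]⟩) fun h => ⟨0, by simp [h]⟩
  have hEY : ∫ ω, Y ω ∂μ = -p := by
    rw [integral_eq_neg_integral_of_map_add_eq_map_neg hX_int (hY_L2.integrable one_le_two) hsymm]
    simpa using hEX fun x => x
  have hEY2 : ∫ ω, Y ω ^ 2 ∂μ = p := by
    have h := variance_eq_sub hY_L2
    simp only [Pi.pow_apply, hvar, hEY] at h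
    linarith
  have hEcosX : ∫ ω, cos (π * X ω) ∂μ ≠ 0 := by
    rw [hEX fun x => cos (π * x)]
    simp only [mul_one, mul_zero, cos_pi, cos_zero]
    contrapose! hp_ne
    linarith
  have hYae := ae_eq_neg_one_or_eq_zero_of_integral_eq_zero hY_L2 (by linarith)
    (hindep.integral_sin_pi_mul_eq_zero_of_map_add_eq_map_neg hX.aemeasurable hY.aemeasurable
      hX_intValued hEcosX hsymm)
  obtain ⟨hYneg, hYzero⟩ := measure_eq_ofReal_integral_of_ae_eq_neg_one_or_eq_zero hY hYae
  rw [hEY, neg_neg] at hYneg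
  rw [hEY, ← sub_eq_add_neg] at hYzero
  refine ⟨map_eq_map_of_ae_eq_or_eq hY.aemeasurable hX.neg.aemeasurable (by norm_num) hYae
    (hXae.mono fun ω h => by simpa only [neg_inj, neg_eq_zero] using h) ?_ ?_, hYneg, hYzero⟩
  <;> simp only [neg_inj, neg_eq_zero, hX1, hX0, hYneg, hYzero]
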